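/- arXiv:2505.23391 — 2 statements merged into one kernel-verified Lean document; each statement's English description precedes it below -/
import Mathlib

section
/- Let k, l be nonzero integers with k ≠ l, and η, ξ, t real. Then (ηl − kξ)² ≤ |(η − kt)(η − ξ − (k − l)t)|·l² + |η − kt|·|ξ − lt|·|(k,l)|·|k − l| + |ξ − lt|·|η − ξ − (k − l)t|·k², where |(k,l)| denotes max(|k|,|l|) (or the Euclidean norm of (k,l), up to constant). -/
/-! With `a = η - k t` and `b = ξ - l t` one has `η l - k ξ = a l - k b` and
`η - ξ - (k - l) t = a - b`, and the square `(a l - k b)²` splits as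
`a (a - b) l² + a b (k - l)² - b (a - b) k²`, in which every term pairs two of the three
factors `a`, `b`, `a - b`.
Bounding each term by its absolute value, and `|k - l|` by `2 max (|k|, |l|)`, gives the
inequality. -/

section

variable {R : Type*}

theorem sq_mul_sub_mul_eq [CommRing R] (a b k l : R) :
    (a * l - k * b) ^ 2 = a * (a - b) * l ^ 2 + a * b * (k - l) ^ 2 - b * (a - b) * k ^ 2 := by
  ring

theorem sq_mul_sub_mul_le [CommRing R] [LinearOrder R] [IsStrictOrderedRing R] (a b k l : R) :
    (a * l - k * b) ^ 2 ≤
      |a * (a - b)| * l ^ 2 + |a| * |b| * (k - l) ^ 2 + |b| * |a - b| * k ^ 2 := by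
  rw [sq_mul_sub_mul_eq]
  have hab : a * b ≤ |a| * |b| := abs_mul a b ▸ le_abs_self _
  have hba : -(b * (a - b)) ≤ |b| * |a - b| := abs_mul b (a - b) ▸ neg_le_abs _
  have h₁ := mul_le_mul_of_nonneg_right (le_abs_self (a * (a - b))) (sq_nonneg l)
  have h₂ := mul_le_mul_of_nonneg_right hab (sq_nonneg (k - l))
  have h₃ := mul_le_mul_of_nonneg_right hba (sq_nonneg k)
  linarith

theorem abs_sub_le_two_mul_max [Ring R] [LinearOrder R] [IsOrderedRing R] (k l : R) :
    |k - l| ≤ 2 * max |k| |l| := by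
  rw [two_mul]
  exact (abs_sub k l).trans (add_le_add (le_max_left _ _) (le_max_right _ _))

end

theorem stmt_9_general (k l : ℤ) (η ξ t : ℝ) :
    (η * (l : ℝ) - (k : ℝ) * ξ) ^ 2 ≤
      |(η - k * t) * (η - ξ - ((k : ℝ) - l) * t)| * (l : ℝ) ^ 2 +
      |η - (k : ℝ) * t| * |ξ - (l : ℝ) * t| * (2 * max |(k : ℝ)| |(l : ℝ)|) * |(k : ℝ) - l| +
      |ξ - (l : ℝ) * t| * |η - ξ - ((k : ℝ) - l) * t| * (k : ℝ) ^ 2 := by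
  set a := η - k * t
  set b := ξ - l * t
  have hlhs : η * l - k * ξ = a * l - k * b := by ring
  have hdiff : η - ξ - ((k : ℝ) - l) * t = a - b := by ring
  have hmid : |a| * |b| * ((k : ℝ) - l) ^ 2 ≤
      |a| * |b| * (2 * max |(k : ℝ)| |(l : ℝ)|) * |(k : ℝ) - l| := by
    rw [← sq_abs, sq, ← mul_assoc]
    gcongr
    exact abs_sub_le_two_mul_max (k : ℝ) l
  rw [hlhs, hdiff]
  linarith [sq_mul_sub_mul_le a b (k : ℝ) l]

theorem stmt_9 (k l : ℤ) (hk : k ≠ 0) (hl : l ≠ 0) (hkl : k ≠ l) (η ξ t : ℝ) :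
    (η * (l : ℝ) - (k : ℝ) * ξ) ^ 2 ≤
      |(η - k * t) * (η - ξ - ((k : ℝ) - l) * t)| * (l : ℝ) ^ 2 +
      |η - (k : ℝ) * t| * |ξ - (l : ℝ) * t| * (2 * max |(k : ℝ)| |(l : ℝ)|) * |(k : ℝ) - l| +
      |ξ - (l : ℝ) * t| * |η - ξ - ((k : ℝ) - l) * t| * (k : ℝ) ^ 2 :=
  stmt_9_general k l η ξ t
end

section
/- For all t ∈ ℝ and all real a, b with ⟨t−a⟩ ≥ ⟨t−b⟩, where ⟨s⟩ = (1 + s²)^{1/2}, we have |(t−a)/⟨t−a⟩ − (t−b)/⟨t−b⟩| ≤ 2|a − b|/⟨t − a⟩. -/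
theorem stmt_12 (t a b : ℝ)
    (h : Real.sqrt (1 + (t - b) ^ 2) ≤ Real.sqrt (1 + (t - a) ^ 2)) :
    |(t - a) / Real.sqrt (1 + (t - a) ^ 2) - (t - b) / Real.sqrt (1 + (t - b) ^ 2)| ≤
      2 * |a - b| / Real.sqrt (1 + (t - a) ^ 2) := by
  set x := t - a with hxdef
  set y := t - b with hydef
  set X := Real.sqrt (1 + x ^ 2) with hXdef
  set Y := Real.sqrt (1 + y ^ 2) with hYdef
  have hXpos : 0 < X := Real.sqrt_pos.2 (by positivity)
  have hYpos : 0 < Y := Real.sqrt_pos.2 (by positivity)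
  have hX2 : X ^ 2 = 1 + x ^ 2 := Real.sq_sqrt (by positivity)
  have hY2 : Y ^ 2 = 1 + y ^ 2 := Real.sq_sqrt (by positivity)
  have hxy : 1 + |x * y| ≤ X * Y := by
    nlinarith [sq_nonneg (|x| - |y|), sq_abs x, sq_abs y, sq_abs (x * y),
      abs_mul x y, mul_pos hXpos hYpos, sq_nonneg (X * Y - 1 - |x * y|)]
  have key : x / X - y / Y = (x - y) * (X * Y + 1 - x * y) / (X * Y * (X + Y)) := by
    have hXY : X * Y ≠ 0 := by positivity
    field_simp
    linear_combination x * hY2 - y * hX2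
  have hnumnn : 0 ≤ X * Y + 1 - x * y := by
    have := neg_abs_le (x * y)
    nlinarith
  have hnumle : X * Y + 1 - x * y ≤ 2 * (X * Y) := by
    have := le_abs_self (- (x * y))
    have h2 : - (x * y) ≤ |x * y| := by simpa using this
    nlinarith
  rw [key, abs_div, abs_mul]
  have hden : |X * Y * (X + Y)| = X * Y * (X + Y) := abs_of_pos (by positivity)
  rw [hden, abs_of_nonneg hnumnn]
  have hxyab : |x - y| = |a - b| := by rw [hxdef, hydef, show t - a - (t - b) = -(a - b) by ring, abs_neg]
  calc |x - y| * (X * Y + 1 - x * y) / (X * Y * (X + Y))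
      ≤ |a - b| * (2 * (X * Y)) / (X * Y * X) := by
        apply div_le_div₀ (by positivity)
        · rw [hxyab]; exact mul_le_mul_of_nonneg_left hnumle (abs_nonneg _)
        · positivity
        · nlinarith [abs_nonneg (a - b)]
    _ = 2 * |a - b| / X := by field_simp
end
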